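/- arXiv:1801.00328 — 2 statements merged into one kernel-verified Lean document; each statement's English description precedes it below -/
import Mathlib

section
/- Every non-crossing spanning path v of a convex point set that contains at least one diagonal has a neighbor u in the path graph G(P) such that the number of diagonals in u is one less than the number of diagonals in v. -/
/-!
Let `p k — p (k + 1)` be the last diagonal of the path `p 0, …, p (n - 1)`. After it the path uses
only hull edges, so `p (k + 1), …, p (n - 1)` is an arc of consecutive boundary vertices. The
vertex `p k` must be the boundary vertex just beyond the end `p (n - 1)` of this arc: otherwise
both boundary neighbours of the arc are visited before `p k`, and they lie on opposite sides of
the chord `p k — p (k + 1)`, so the path up to `p k` crosses that chord. Reversing the path after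
`p k` therefore trades the diagonal for the hull edge `p k — p (n - 1)`, and a hull edge crosses
nothing.
-/

namespace PG

/-- The `k`-th vertex (mod `n`) of the convex polygon. -/
def pt (n : ℕ) (hn : 0 < n) (k : ℕ) : Fin n := ⟨k % n, Nat.mod_lt _ hn⟩

/-- `e` is a boundary (convex hull) edge of the convex `n`-gon. -/
def IsHullEdge {n : ℕ} (e : Sym2 (Fin n)) : Prop :=
  ∃ a b : Fin n, e = s(a, b) ∧ ((a.val + 1) % n = b.val ∨ (b.val + 1) % n = a.val)

instance {n : ℕ} : DecidablePred (IsHullEdge (n := n)) := fun _ => by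
  unfold IsHullEdge; infer_instance

/-- Two chords of the convex `n`-gon cross (intersect in interior points):
their endpoint pairs are all distinct and separate each other in the cyclic order. -/
def Crosses {n : ℕ} (e f : Sym2 (Fin n)) : Prop :=
  ∃ a b c d : Fin n, e = s(a, b) ∧ f = s(c, d) ∧
    a ≠ b ∧ c ≠ d ∧ a ≠ c ∧ a ≠ d ∧ b ≠ c ∧ b ≠ d ∧
    (((c.val + n - a.val) % n < (b.val + n - a.val) % n) ↔
      ¬((d.val + n - a.val) % n < (b.val + n - a.val) % n))

instance {n : ℕ} (e f : Sym2 (Fin n)) : Decidable (Crosses e f) := by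
  unfold Crosses; infer_instance

/-- The edge set of the spanning path visiting the points in the order given
by the permutation `p`. -/
def pathEdges {n : ℕ} (p : Equiv.Perm (Fin n)) : Finset (Sym2 (Fin n)) :=
  Finset.univ.filter (fun e => ∃ i j : Fin n, e = s(p i, p j) ∧ j.val = i.val + 1)

/-- `E` is the edge set of a non-crossing (plane) spanning path. -/
def IsNCPath {n : ℕ} (E : Finset (Sym2 (Fin n))) : Prop :=
  (∃ p : Equiv.Perm (Fin n), E = pathEdges p) ∧ ∀ e ∈ E, ∀ f ∈ E, ¬ Crosses e f

instance {n : ℕ} : DecidablePred (IsNCPath (n := n)) := fun _ => by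
  unfold IsNCPath pathEdges; infer_instance

/-- Vertices of the path graph `G(P)`: non-crossing spanning paths. -/
def PVert (n : ℕ) := {E : Finset (Sym2 (Fin n)) // IsNCPath E}

instance {n : ℕ} : Fintype (PVert n) := Subtype.fintype _
instance {n : ℕ} : DecidableEq (PVert n) := Subtype.instDecidableEq

/-- The path graph `G(P)`: two plane spanning paths are adjacent iff their
edge sets differ in exactly two edges. -/
def pathGraph (n : ℕ) : SimpleGraph (PVert n) where
  Adj u v := u ≠ v ∧ (u.1 \ v.1 ∪ v.1 \ u.1).card = 2
  symm := ⟨by rintro u v ⟨h1, h2⟩; exact ⟨h1.symm, by rwa [Finset.union_comm]⟩⟩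
  loopless := ⟨by rintro u ⟨h, _⟩; exact h rfl⟩

instance {n : ℕ} : DecidableRel (pathGraph n).Adj := fun u v => by
  unfold pathGraph; infer_instance

/-- `v` is a boundary path: all its edges are hull edges. -/
def IsBoundary {n : ℕ} (v : PVert n) : Prop := ∀ e ∈ v.1, IsHullEdge e

/-- Number of diagonals (the level) of a path. -/
def diagCount {n : ℕ} (v : PVert n) : ℕ :=
  (v.1.filter (fun e => ¬ IsHullEdge e)).card

/-- Degree of a point in an edge set. -/
def degIn {n : ℕ} (E : Finset (Sym2 (Fin n))) (x : Fin n) : ℕ :=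
  (E.filter (fun e => x ∈ e)).card


-- Vertices of the polygon are residues mod `n`: the wraparound arithmetic of `Fin n` is intended.
open Finset Fin.NatCast Fin.CommRing

section Crossing

variable {n : ℕ}

lemma val_sub_eq_mod (x a : Fin n) : (x - a).val = (x.val + n - a.val) % n := by
  rw [Fin.val_sub]
  congr 1
  have := a.isLt
  omega

lemma crosses_iff {e f : Sym2 (Fin n)} :
    Crosses e f ↔ ∃ a b c d : Fin n, e = s(a, b) ∧ f = s(c, d) ∧
      a ≠ b ∧ c ≠ d ∧ a ≠ c ∧ a ≠ d ∧ b ≠ c ∧ b ≠ d ∧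
      ((c - a).val < (b - a).val ↔ ¬ (d - a).val < (b - a).val) := by
  simp only [Crosses, val_sub_eq_mod]

variable [NeZero n]

lemma val_sub_ne_val_sub {x y a : Fin n} (h : x ≠ y) : (x - a).val ≠ (y - a).val :=
  fun hxy => h (sub_left_inj.1 (Fin.ext hxy))

lemma val_add_one_of_ne_zero {z : Fin n} (h : z + 1 ≠ 0) : (z + 1).val = z.val + 1 := by
  rw [Fin.val_add, Fin.val_one', Nat.add_mod_mod]
  refine Nat.mod_eq_of_lt (lt_of_le_of_ne z.isLt fun hz => h (Fin.ext ?_))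
  rw [Fin.val_add, Fin.val_one', Nat.add_mod_mod, hz, Nat.mod_self, Fin.val_zero]

lemma val_neg_one (hn : 1 < n) : (-1 : Fin n).val = n - 1 := by
  have h1 : (1 : Fin n).val = 1 := by rw [Fin.val_one', Nat.mod_eq_of_lt hn]
  rw [Fin.val_neg, if_neg (fun h => by simp [h] at h1), h1]

lemma val_sub_pos {x a : Fin n} (h : x ≠ a) : 0 < (x - a).val :=
  Nat.pos_of_ne_zero (Fin.val_ne_zero_iff.2 (sub_ne_zero.2 h))

lemma isHullEdge_mk_iff {x y : Fin n} : IsHullEdge s(x, y) ↔ y = x + 1 ∨ x = y + 1 := by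
  have hval : ∀ a b : Fin n, (a.val + 1) % n = b.val ↔ b = a + 1 := fun a b => by
    rw [Fin.ext_iff, Fin.val_add, Fin.val_one', Nat.add_mod_mod, eq_comm]
  constructor
  · rintro ⟨a, b, hab, h⟩
    rcases Sym2.eq_iff.1 hab with ⟨rfl, rfl⟩ | ⟨rfl, rfl⟩ <;> simp only [hval] at h <;> tauto
  · intro h
    exact ⟨x, y, rfl, by simpa only [hval] using h⟩

lemma not_crosses_of_isHullEdge_right {e f : Sym2 (Fin n)} (hf : IsHullEdge f) :
    ¬ Crosses e f := by
  rw [crosses_iff]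
  rintro ⟨a, b, c, d, -, rfl, -, -, hac, had, hbc, hbd, hsep⟩
  -- seen from `a`, the positions of the two ends of a hull edge are consecutive
  have key : ∀ {x y : Fin n}, y = x + 1 → y ≠ a → b ≠ x → b ≠ y →
      ((x - a).val < (b - a).val ↔ (y - a).val < (b - a).val) := by
    rintro x y rfl hy hbx hby
    have hxy : (x + 1 - a).val = (x - a).val + 1 := by
      rw [add_sub_right_comm]
      exact val_add_one_of_ne_zero (by rwa [← add_sub_right_comm, sub_ne_zero])
    have := val_sub_ne_val_sub (a := a) hbx
    have := val_sub_ne_val_sub (a := a) hby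
    omega
  rcases isHullEdge_mk_iff.1 hf with h | h
  · have := key h had.symm hbc hbd
    tauto
  · have := key h hac.symm hbd hbc
    tauto

lemma not_crosses_of_isHullEdge_left {e f : Sym2 (Fin n)} (he : IsHullEdge e) :
    ¬ Crosses e f := by
  rw [crosses_iff]
  rintro ⟨a, b, c, d, rfl, -, hab, -, hac, had, hbc, hbd, hsep⟩
  have hn : 1 < n := by
    have := Fin.val_ne_iff.2 hab
    omega
  have := val_sub_pos hac.symm
  have := val_sub_pos had.symm
  have := val_sub_ne_val_sub (a := a) hbc.symm
  have := val_sub_ne_val_sub (a := a) hbd.symm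
  have := (c - a).isLt
  have := (d - a).isLt
  -- seen from `a`, the other end of the hull edge is at position `1` or `n - 1`
  rcases isHullEdge_mk_iff.1 he with rfl | rfl
  · rw [add_sub_cancel_left, Fin.val_one', Nat.mod_eq_of_lt hn] at *
    omega
  · rw [sub_add_cancel_left, val_neg_one hn] at *
    omega

lemma crosses_of_not_iff {σ : Fin n} (hσ : σ = 1 ∨ σ = -1) {a b c d : Fin n}
    (hab : a ≠ b) (hcd : c ≠ d) (hac : a ≠ c) (had : a ≠ d) (hbc : b ≠ c) (hbd : b ≠ d)
    (h : ¬ ((σ * (c - a)).val < (σ * (b - a)).val ↔ (σ * (d - a)).val < (σ * (b - a)).val)) :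
    Crosses s(a, b) s(c, d) := by
  refine crosses_iff.2 ⟨a, b, c, d, rfl, rfl, hab, hcd, hac, had, hbc, hbd, ?_⟩
  rcases hσ with rfl | rfl
  · simp only [one_mul] at h
    tauto
  · simp only [neg_one_mul, Fin.val_neg, sub_eq_zero, if_neg hab.symm, if_neg hac.symm,
      if_neg had.symm] at h
    have := val_sub_ne_val_sub (a := a) hbc
    have := val_sub_ne_val_sub (a := a) hbd
    have := (b - a).isLt
    have := (c - a).isLt
    have := (d - a).isLt
    omega

end Crossing

lemma exists_eq_add_nsmul_of_steps {G : Type*} [AddCommGroup G] {f : ℕ → G} {m : ℕ} (u : G)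
    (hinj : Set.InjOn f (Set.Iic m))
    (hstep : ∀ t < m, f (t + 1) = f t + u ∨ f t = f (t + 1) + u) :
    ∃ σ, (σ = u ∨ σ = -u) ∧ ∀ t ≤ m, f t = f 0 + t • σ := by
  have hdiff : ∀ t < m, f (t + 1) - f t = u ∨ f (t + 1) - f t = -u := by
    intro t ht
    rcases hstep t ht with h | h <;> rw [h] <;> [left; right] <;> abel
  rcases Nat.eq_zero_or_pos m with rfl | hm
  · exact ⟨u, Or.inl rfl, fun t ht => by simp [Nat.le_zero.1 ht]⟩
  obtain ⟨σ, hσ0, hσ⟩ : ∃ σ, f 1 - f 0 = σ ∧ (σ = u ∨ σ = -u) :=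
    ⟨_, rfl, by simpa using hdiff 0 hm⟩
  refine ⟨σ, hσ, ?_⟩
  -- a step by `-σ` would return to the previous point
  have hconst : ∀ t, t < m → f (t + 1) - f t = σ := by
    intro t
    induction t with
    | zero => exact fun _ => by simpa using hσ0
    | succ t ih =>
      intro ht
      have hback : f (t + 2) - f (t + 1) ≠ -σ := fun h => by
        have : f (t + 2) = f t := by
          rw [← sub_add_cancel (f (t + 2)) (f (t + 1)), h, ← ih (by omega)]
          abel
        exact absurd (hinj (by simp; omega) (by simp; omega) this) (by omega)
      rcases hdiff (t + 1) ht with h | h <;> rcases hσ with rfl | rfl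
      · exact h
      · exact absurd (h.trans (neg_neg _).symm) hback
      · exact absurd h hback
      · exact h
  intro t ht
  induction t with
  | zero => simp
  | succ t ih =>
    rw [← sub_add_cancel (f (t + 1)) (f t), hconst t ht, ih (by omega), succ_nsmul]
    abel

lemma exists_succ_not_iff_of_not_iff {P : ℕ → Prop} {i j k : ℕ} (hi : i < k) (hj : j < k)
    (h : ¬ (P i ↔ P j)) : ∃ t, t + 1 < k ∧ ¬ (P t ↔ P (t + 1)) := by
  by_contra! hall
  have hzero : ∀ t < k, (P 0 ↔ P t) := by
    intro t
    induction t with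
    | zero => simp
    | succ t ih => exact fun ht => (ih (by omega)).trans (hall t ht)
  exact h ((hzero i hi).symm.trans (hzero j hj))

section Path

variable {n : ℕ}

def reverseSuffix (k : ℕ) : Equiv.Perm (Fin n) :=
  Function.Involutive.toPerm (fun x => if h : x.val ≤ k then x else ⟨n + k - x.val, by omega⟩) <| by
    intro x
    by_cases hx : x.val ≤ k
    · simp only [dif_pos hx]
    · have : ¬ n + k - x.val ≤ k := by omega
      simp only [dif_neg hx, dif_neg this]
      ext
      simp only
      omega

variable [NeZero n] (p : Equiv.Perm (Fin n))

lemma reverseSuffix_natCast_of_le {k t : ℕ} (ht : t < n) (htk : t ≤ k) :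
    reverseSuffix k (t : Fin n) = t := by
  have : (t : Fin n).val ≤ k := by rwa [Fin.val_cast_of_lt ht]
  exact dif_pos this

lemma reverseSuffix_natCast_of_lt {k t : ℕ} (ht : t < n) (hkt : k < t) :
    reverseSuffix k (t : Fin n) = ↑(n + k - t) := by
  have : ¬ (t : Fin n).val ≤ k := by rw [Fin.val_cast_of_lt ht]; omega
  refine (dif_neg this).trans (Fin.ext ?_)
  simp only [Fin.val_cast_of_lt ht, Fin.val_cast_of_lt (show n + k - t < n by omega)]

lemma apply_natCast_inj {i j : ℕ} (hi : i < n) (hj : j < n) (h : p i = p j) : i = j := by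
  have := congrArg Fin.val (p.injective h)
  rwa [Fin.val_cast_of_lt hi, Fin.val_cast_of_lt hj] at this

lemma mem_pathEdges_iff {e : Sym2 (Fin n)} :
    e ∈ pathEdges p ↔ ∃ t, t + 1 < n ∧ e = s(p t, p ↑(t + 1)) := by
  simp only [pathEdges, mem_filter, mem_univ, true_and]
  constructor
  · rintro ⟨i, j, rfl, hj⟩
    have : ((i.val + 1 : ℕ) : Fin n) = j := Fin.ext (by rw [Fin.val_cast_of_lt (by omega), hj])
    exact ⟨i, by omega, by rw [Fin.cast_val_eq_self, this]⟩
  · rintro ⟨t, ht, rfl⟩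
    exact ⟨t, ↑(t + 1), rfl, by rw [Fin.val_cast_of_lt ht, Fin.val_cast_of_lt (by omega)]⟩

lemma mk_mem_pathEdges_iff {i j : ℕ} (hi : i < n) (hj : j < n) :
    s(p i, p j) ∈ pathEdges p ↔ i + 1 = j ∨ j + 1 = i := by
  rw [mem_pathEdges_iff]
  constructor
  · rintro ⟨t, ht, h⟩
    rcases Sym2.eq_iff.1 h with ⟨h1, h2⟩ | ⟨h1, h2⟩ <;>
    · have := apply_natCast_inj p hi (by omega) h1
      have := apply_natCast_inj p hj (by omega) h2
      omega
  · rintro (rfl | rfl)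
    · exact ⟨i, hj, rfl⟩
    · exact ⟨j, hi, Sym2.eq_swap⟩

lemma mk_ne_mk_of_ne {i j : ℕ} (hi : i + 1 < n) (hj : j + 1 < n) (hij : i ≠ j) :
    s(p i, p ↑(i + 1)) ≠ s(p j, p ↑(j + 1)) := by
  intro h
  rcases Sym2.eq_iff.1 h with ⟨h1, -⟩ | ⟨h1, h2⟩
  · exact hij (apply_natCast_inj p (by omega) (by omega) h1)
  · have := apply_natCast_inj p (by omega) (by omega) h1
    have := apply_natCast_inj p (by omega) (by omega) h2
    omega

lemma pathEdges_reverseSuffix_trans {k : ℕ} (hk : k + 1 < n) :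
    pathEdges ((reverseSuffix k).trans p) =
      insert s(p k, p ↑(n - 1)) ((pathEdges p).erase s(p k, p ↑(k + 1))) := by
  have hlast : n + k - (k + 1) = n - 1 := by omega
  ext e
  simp only [mem_insert, mem_erase, mem_pathEdges_iff, Equiv.trans_apply]
  constructor
  · rintro ⟨t, ht, rfl⟩
    rcases lt_trichotomy t k with htk | rfl | hkt
    · rw [reverseSuffix_natCast_of_le (by omega) htk.le,
        reverseSuffix_natCast_of_le ht (by omega)]
      exact Or.inr ⟨mk_ne_mk_of_ne p ht hk htk.ne, t, ht, rfl⟩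
    · rw [reverseSuffix_natCast_of_le (by omega) le_rfl,
        reverseSuffix_natCast_of_lt ht (by omega), hlast]
      exact Or.inl rfl
    · rw [reverseSuffix_natCast_of_lt (by omega) hkt, reverseSuffix_natCast_of_lt ht (by omega),
        show n + k - t = n + k - (t + 1) + 1 by omega, Sym2.eq_swap]
      exact Or.inr ⟨mk_ne_mk_of_ne p (by omega) hk (by omega), _, by omega, rfl⟩
  · rintro (rfl | ⟨hne, j, hj, rfl⟩)
    · refine ⟨k, hk, ?_⟩
      rw [reverseSuffix_natCast_of_le (by omega) le_rfl,
        reverseSuffix_natCast_of_lt hk (by omega), hlast]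
    rcases lt_trichotomy j k with hjk | rfl | hkj
    · refine ⟨j, hj, ?_⟩
      rw [reverseSuffix_natCast_of_le (by omega) hjk.le,
        reverseSuffix_natCast_of_le hj (by omega)]
    · exact absurd rfl hne
    · refine ⟨n + k - (j + 1), by omega, ?_⟩
      rw [reverseSuffix_natCast_of_lt (by omega) (by omega),
        reverseSuffix_natCast_of_lt (by omega) (by omega),
        show n + k - (n + k - (j + 1)) = j + 1 by omega,
        show n + k - (n + k - (j + 1) + 1) = j by omega, Sym2.eq_swap]

end Path

section LastDiagonal

variable {n : ℕ} [NeZero n] (p : Equiv.Perm (Fin n))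

lemma exists_last_diagonal (hp : ¬ ∀ e ∈ pathEdges p, IsHullEdge e) :
    ∃ k, k + 1 < n ∧ ¬ IsHullEdge s(p k, p ↑(k + 1)) ∧
      ∀ t, k < t → t + 1 < n → IsHullEdge s(p t, p ↑(t + 1)) := by
  simp only [not_forall, exists_prop] at hp
  obtain ⟨_, he, hdiag⟩ := hp
  obtain ⟨t, ht, rfl⟩ := (mem_pathEdges_iff p).1 he
  let S := (range (n - 1)).filter fun t : ℕ => ¬ IsHullEdge s(p t, p ↑(t + 1))
  obtain ⟨k, hkS, hmax⟩ := S.exists_max_image id ⟨t, mem_filter.2 ⟨mem_range.2 (by omega), hdiag⟩⟩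
  simp only [S, mem_filter, mem_range] at hkS hmax
  exact ⟨k, by omega, hkS.2, fun t hkt ht =>
    by_contra fun h => absurd (hmax t ⟨by omega, h⟩) (not_le.2 hkt)⟩

variable {p}

lemma exists_suffix_eq_add_mul {k : ℕ} (hk : k + 1 < n)
    (hrun : ∀ t, k < t → t + 1 < n → IsHullEdge s(p t, p ↑(t + 1))) :
    ∃ σ : Fin n, (σ = 1 ∨ σ = -1) ∧
      ∀ t, k + 1 + t < n → p ↑(k + 1 + t) = p ↑(k + 1) + t * σ := by
  obtain ⟨σ, hσ, h⟩ := exists_eq_add_nsmul_of_steps (f := fun t => p ↑(k + 1 + t))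
    (m := n - 2 - k) 1
    (fun i hi j hj hij => by
      simp only [Set.mem_Iic] at hi hj
      have := apply_natCast_inj p (by omega) (by omega) hij
      omega)
    (fun t ht => isHullEdge_mk_iff.1 (hrun (k + 1 + t) (by omega) (by omega)))
  exact ⟨σ, hσ, fun t ht => by simpa [nsmul_eq_mul] using h t (by omega)⟩

/-- Comparing boundary positions, counted from `p (k + 1)` in the direction `σ`, with that of `p k`
tells the side of the chord `p k — p (k + 1)`: in a plane path all earlier vertices lie on one
side. -/
lemma side_iff_side_of_lt (hnc : ∀ e ∈ pathEdges p, ∀ f ∈ pathEdges p, ¬ Crosses e f)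
    {σ : Fin n} (hσ : σ = 1 ∨ σ = -1) {k i j : ℕ} (hk : k + 1 < n) (hi : i < k) (hj : j < k) :
    ((σ * (p i - p ↑(k + 1))).val < (σ * (p k - p ↑(k + 1))).val ↔
      (σ * (p j - p ↑(k + 1))).val < (σ * (p k - p ↑(k + 1))).val) := by
  by_contra h
  obtain ⟨t, ht, hsep⟩ := exists_succ_not_iff_of_not_iff
    (P := fun t : ℕ => (σ * (p t - p ↑(k + 1))).val < (σ * (p k - p ↑(k + 1))).val) hi hj h
  have hne : ∀ {a b : ℕ}, a < n → b < n → a ≠ b → p a ≠ p b :=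
    fun ha hb hab h => hab (apply_natCast_inj p ha hb h)
  refine hnc _ ((mk_mem_pathEdges_iff p (by omega) (by omega)).2 (Or.inr rfl)) _
    ((mem_pathEdges_iff p).2 ⟨t, by omega, rfl⟩) (crosses_of_not_iff hσ ?_ ?_ ?_ ?_ ?_ ?_ hsep)
  all_goals exact hne (by omega) (by omega) (by omega)

lemma exists_lt_apply_eq_of_suffix {k : ℕ} {A σ : Fin n} (hσσ : σ * σ = 1)
    (hsuf : ∀ t, k + 1 + t < n → p ↑(k + 1 + t) = A + t * σ) {l : ℕ} (hl : n - 1 - k ≤ l)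
    (hln : l < n) (hlk : p k ≠ A + l * σ) : ∃ i < k, p i = A + l * σ := by
  have hpi : p ↑(p.symm (A + l * σ)).val = A + l * σ := by simp
  refine ⟨_, lt_of_not_ge fun hge => ?_, hpi⟩
  set i := (p.symm (A + l * σ)).val
  rcases eq_or_lt_of_le hge with rfl | hik
  · exact hlk hpi
  · have hi := hsuf (i - (k + 1)) (by omega)
    rw [show k + 1 + (i - (k + 1)) = i by omega, hpi] at hi
    have hcast := congrArg (fun x => (x * σ).val) (add_left_cancel hi)
    simp only [mul_assoc, hσσ, mul_one, Fin.val_cast_of_lt hln,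
      Fin.val_cast_of_lt (show i - (k + 1) < n by omega)] at hcast
    omega

lemma apply_eq_add_mul_of_suffix (hnc : ∀ e ∈ pathEdges p, ∀ f ∈ pathEdges p, ¬ Crosses e f)
    {k : ℕ} (hk : k + 1 < n) (hdiag : ¬ IsHullEdge s(p k, p ↑(k + 1)))
    {σ : Fin n} (hσ : σ = 1 ∨ σ = -1)
    (hsuf : ∀ t, k + 1 + t < n → p ↑(k + 1 + t) = p ↑(k + 1) + t * σ) :
    p k = p ↑(k + 1) + ↑(n - 1 - k) * σ := by
  have hσσ : σ * σ = 1 := by rcases hσ with rfl | rfl <;> simp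
  set A := p ↑(k + 1)
  -- the position of `x` on the boundary, walking from `A` in the direction `σ`
  set coord : Fin n → ℕ := fun x => (σ * (x - A)).val
  have hadd_coord : ∀ x, A + (coord x : Fin n) * σ = x := fun x => by
    simp only [coord, Fin.cast_val_eq_self]
    linear_combination (x - A) * hσσ
  have hcoord_add : ∀ l < n, coord (A + l * σ) = l := fun l hl => by
    simp only [coord, add_sub_cancel_left]
    rw [mul_left_comm, hσσ, mul_one, Fin.val_cast_of_lt hl]
  set j := coord (p k)
  have hjn : j < n := Fin.isLt _
  have hj : n - 1 - k ≤ j := by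
    by_contra h
    have := hsuf j (by omega)
    rw [hadd_coord] at this
    have := apply_natCast_inj p (by omega) (by omega) this
    omega
  have hj' : j ≠ n - 1 := by
    intro h
    apply hdiag
    have hpk := hadd_coord (p k)
    rw [show coord (p k) = n - 1 from h, Nat.cast_sub NeZero.one_le, Fin.natCast_self,
      Nat.cast_one, zero_sub] at hpk
    rw [← hpk, isHullEdge_mk_iff]
    rcases hσ with rfl | rfl
    · left; ring
    · right; ring
  rw [← hadd_coord (p k)]
  congr 3
  by_contra hjm
  -- both boundary neighbours of the run are visited before `p k`, on opposite sides of the chord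
  obtain ⟨i, hi, hpi⟩ := exists_lt_apply_eq_of_suffix hσσ hsuf le_rfl (by omega)
    (fun h => hjm (by rw [← hcoord_add (n - 1 - k) (by omega), ← h]))
  obtain ⟨i', hi', hpi'⟩ := exists_lt_apply_eq_of_suffix hσσ hsuf (l := n - 1) (by omega)
    (by omega) (fun h => hj' (by rw [← hcoord_add (n - 1) (by omega), ← h]))
  have := side_iff_side_of_lt hnc hσ hk hi hi'
  rw [hpi, hpi'] at this
  change coord _ < j ↔ coord _ < j at this
  rw [hcoord_add (n - 1 - k) (by omega), hcoord_add (n - 1) (by omega)] at this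
  omega

lemma isHullEdge_of_last_diagonal (hnc : ∀ e ∈ pathEdges p, ∀ f ∈ pathEdges p, ¬ Crosses e f)
    {k : ℕ} (hk : k + 1 < n) (hdiag : ¬ IsHullEdge s(p k, p ↑(k + 1)))
    (hrun : ∀ t, k < t → t + 1 < n → IsHullEdge s(p t, p ↑(t + 1))) :
    IsHullEdge s(p k, p ↑(n - 1)) := by
  obtain ⟨σ, hσ, hsuf⟩ := exists_suffix_eq_add_mul hk hrun
  have hlast := hsuf (n - 2 - k) (by omega)
  rw [show k + 1 + (n - 2 - k) = n - 1 by omega] at hlast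
  rw [apply_eq_add_mul_of_suffix hnc hk hdiag hσ hsuf, hlast, isHullEdge_mk_iff,
    show n - 1 - k = n - 2 - k + 1 by omega]
  push_cast
  rcases hσ with rfl | rfl
  · right; ring
  · left; ring

end LastDiagonal

lemma sdiff_union_sdiff_insert_erase {α : Type*} [DecidableEq α] {E : Finset α} {d f : α}
    (hd : d ∈ E) (hf : f ∉ E) :
    E \ insert f (E.erase d) ∪ insert f (E.erase d) \ E = {d, f} := by
  ext x
  simp only [mem_union, mem_sdiff, mem_insert, mem_erase, mem_singleton]
  grind

lemma exists_adj_diagCount_add_one {n : ℕ} [NeZero n] {v : PVert n} {d f : Sym2 (Fin n)}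
    (hd : d ∈ v.1) (hdiag : ¬ IsHullEdge d) (hf : IsHullEdge f) (hfv : f ∉ v.1)
    (hpath : ∃ q, insert f (v.1.erase d) = pathEdges q) :
    ∃ u : PVert n, (pathGraph n).Adj v u ∧ diagCount u + 1 = diagCount v := by
  have hnc : ∀ e ∈ insert f (v.1.erase d), ∀ g ∈ insert f (v.1.erase d), ¬ Crosses e g := by
    simp only [mem_insert, mem_erase]
    rintro e (rfl | ⟨-, he⟩) g (rfl | ⟨-, hg⟩)
    · exact not_crosses_of_isHullEdge_left hf
    · exact not_crosses_of_isHullEdge_left hf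
    · exact not_crosses_of_isHullEdge_right hf
    · exact v.2.2 e he g hg
  refine ⟨⟨_, hpath, hnc⟩, ⟨fun h => hfv ?_, ?_⟩, ?_⟩
  · rw [h]
    exact mem_insert_self _ _
  · rw [sdiff_union_sdiff_insert_erase hd hfv, card_pair (ne_of_mem_of_not_mem hd hfv)]
  · simp only [diagCount, filter_insert, hf, not_true_eq_false, if_false, filter_erase]
    exact card_erase_add_one (mem_filter.2 ⟨hd, hdiag⟩)

theorem exists_neighbor_lower_level_general (n : ℕ) (v : PVert n)
    (hv : ¬ IsBoundary v) :
    ∃ u : PVert n, (pathGraph n).Adj v u ∧ diagCount u + 1 = diagCount v := by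
  obtain ⟨_, ⟨p, rfl⟩, hnc⟩ := v
  have : NeZero n := ⟨by rintro rfl; exact hv fun e _ => isEmptyElim e⟩
  obtain ⟨k, hk, hdiag, hrun⟩ := exists_last_diagonal p hv
  have hf := isHullEdge_of_last_diagonal hnc hk hdiag hrun
  have hfp : s(p k, p ↑(n - 1)) ∉ pathEdges p := fun hmem => by
    rcases (mk_mem_pathEdges_iff p (by omega) (by omega)).1 hmem with h | h
    · exact hdiag (by rw [h]; exact hf)
    · omega
  exact exists_adj_diagCount_add_one ((mk_mem_pathEdges_iff p (by omega) hk).2 (Or.inl rfl))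
    hdiag hf hfp ⟨_, (pathEdges_reverseSuffix_trans p hk).symm⟩

/-- Every plane spanning path with at least one diagonal has a neighbor in `G(P)`
with one diagonal fewer. -/
theorem exists_neighbor_lower_level (n : ℕ) (hn : 3 ≤ n) (v : PVert n)
    (hv : ¬ IsBoundary v) :
    ∃ u : PVert n, (pathGraph n).Adj v u ∧ diagCount u + 1 = diagCount v :=
  exists_neighbor_lower_level_general n v hv

end PG
end

section
/- Let v be a non-crossing spanning path of a convex point set P (n ≥ 5) with exactly one diagonal, whose hull edges form two arcs: P_1 from a to c via b (b adjacent to a in P_1, and P_1 has at least two edges) and P_2 from c's hull-neighbor d to y. If v = P_1 ∪ P_2 ∪ {(a,d)}, then v has a neighbor v' in G(P) with two diagonals such that (a,b) ∉ v'; if v = P_1 ∪ P_2 ∪ {(c,y)}, then no such neighbor exists. -/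
namespace PG

/-- The edge set of the boundary arc starting at vertex `s0` with `len` edges. -/
def arc (n : ℕ) (hn : 0 < n) (s0 len : ℕ) : Finset (Sym2 (Fin n)) :=
  (Finset.range len).image (fun i => s(pt n hn (s0 + i), pt n hn (s0 + i + 1)))

/-! Write `x` for the point `pt (r + x)`, `x < n`, so that `a, b, c, d, y` are `0, 1, m, m + 1,
n - 1`. In these offset coordinates a chord is a pair `x < y`, it is a hull edge iff
`y = x + 1` or `(x, y) = (0, n - 1)`, and two chords cross iff their endpoints interleave.

All spanning paths have `n - 1` edges, so a neighbour in `G(P)` exchanges one edge for another.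
If the diagonal is `(a, d)`, exchanging `(a, b)` for `(a, c)` gives the plane path
`b, …, c, a, d, …, y` with the two diagonals `(a, c)` and `(a, d)`. If the diagonal is `(c, y)`,
removing `(a, b)` isolates `a`, so the new edge joins `a` to a vertex of degree at most one in what
is left, that is to `b` (giving `v` back) or to `d`; but `(a, d)` crosses `(c, y)`. -/

section Offsets

variable {n : ℕ} (hn : 0 < n) (r : ℕ)

lemma pt_add_eq_pt_add_iff {u v : ℕ} : pt n hn (r + u) = pt n hn (r + v) ↔ u % n = v % n := by
  rw [Fin.ext_iff]
  exact ⟨Nat.ModEq.add_left_cancel' r, Nat.ModEq.add_left r⟩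

lemma pt_add_inj {u v : ℕ} (hu : u < n) (hv : v < n) :
    pt n hn (r + u) = pt n hn (r + v) ↔ u = v := by
  rw [pt_add_eq_pt_add_iff, Nat.mod_eq_of_lt hu, Nat.mod_eq_of_lt hv]

lemma exists_eq_pt_add (z : Fin n) : ∃ x < n, z = pt n hn (r + x) := by
  have hinj : Function.Injective fun x : Fin n => pt n hn (r + x) :=
    fun x y h => Fin.ext ((pt_add_inj hn r x.2 y.2).mp h)
  obtain ⟨x, hx⟩ := Finite.injective_iff_surjective.mp hinj z
  exact ⟨x, x.2, hx.symm⟩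

lemma val_pt_add_add_one_mod (x : ℕ) :
    ((pt n hn (r + x)).val + 1) % n = (pt n hn (r + (x + 1))).val :=
  Nat.mod_add_mod _ _ _

lemma val_pt_add_sub_val_pt_add_mod (x y : ℕ) :
    ((pt n hn (r + x)).val + n - (pt n hn (r + y)).val) % n =
      if y % n ≤ x % n then x % n - y % n else x % n + n - y % n := by
  have hx := Nat.mod_lt x hn
  have hy := Nat.mod_lt y hn
  have hrhs : (x % n + n - y % n) % n =
      if y % n ≤ x % n then x % n - y % n else x % n + n - y % n := by
    split_ifs with h
    · rw [show x % n + n - y % n = x % n - y % n + n by omega, Nat.add_mod_right,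
        Nat.mod_eq_of_lt (by omega)]
    · exact Nat.mod_eq_of_lt (by omega)
  rw [← hrhs]
  have hlt : (r + y) % n < n := Nat.mod_lt _ hn
  refine Nat.ModEq.add_right_cancel' (r + y % n) ?_
  calc (r + x) % n + n - (r + y) % n + (r + y % n)
      ≡ (r + x) % n + n - (r + y) % n + (r + y) % n [MOD n] :=
        Nat.ModEq.add_left _ ((Nat.mod_modEq _ _).add_left r |>.trans (Nat.mod_modEq _ _).symm)
    _ = (r + x) % n + n := by omega
    _ ≡ r + x % n + n [MOD n] :=
        Nat.ModEq.add_right _ ((Nat.mod_modEq _ _).trans ((Nat.mod_modEq _ _).add_left r).symm)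
    _ = x % n + n - y % n + (r + y % n) := by omega

end Offsets

def chord (n : ℕ) (hn : 0 < n) (r x y : ℕ) : Sym2 (Fin n) :=
  s(pt n hn (r + x), pt n hn (r + y))

section Chords

variable {n : ℕ} {hn : 0 < n} {r : ℕ}

lemma chord_comm (x y : ℕ) :
    chord n hn r x y = chord n hn r y x :=
  Sym2.eq_swap

lemma chord_eq_chord_iff {x₁ y₁ x₂ y₂ : ℕ} (h₁ : x₁ < n) (h₂ : y₁ < n) (h₃ : x₂ < n)
    (h₄ : y₂ < n) :
    chord n hn r x₁ y₁ = chord n hn r x₂ y₂ ↔ x₁ = x₂ ∧ y₁ = y₂ ∨ x₁ = y₂ ∧ y₁ = x₂ := by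
  rw [chord, chord, Sym2.eq_iff, pt_add_inj hn r h₁ h₃, pt_add_inj hn r h₂ h₄,
    pt_add_inj hn r h₁ h₄, pt_add_inj hn r h₂ h₃]

lemma pt_add_mem_chord_iff {x y z : ℕ} (hx : x < n) (hy : y < n) (hz : z < n) :
    pt n hn (r + z) ∈ chord n hn r x y ↔ z = x ∨ z = y := by
  rw [chord, Sym2.mem_iff, pt_add_inj hn r hz hx, pt_add_inj hn r hz hy]

lemma isHullEdge_chord_iff {x y : ℕ} (hxy : x < y) (hy : y < n) :
    IsHullEdge (chord n hn r x y) ↔ y = x + 1 ∨ x = 0 ∧ y = n - 1 := by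
  have hsucc : ∀ {u v : ℕ}, u < n → v < n →
      (((pt n hn (r + u)).val + 1) % n = (pt n hn (r + v)).val ↔ (u + 1) % n = v) := by
    intro u v hu hv
    rw [val_pt_add_add_one_mod, ← Fin.ext_iff, pt_add_eq_pt_add_iff, Nat.mod_eq_of_lt hv]
  have hmod : ∀ {u : ℕ}, u < n → (u + 1) % n = if u + 1 = n then 0 else u + 1 := by
    intro u hu
    split_ifs with h
    · rw [h, Nat.mod_self]
    · exact Nat.mod_eq_of_lt (by omega)
  constructor
  · rintro ⟨a, b, he, hab⟩
    rcases Sym2.eq_iff.mp he with ⟨rfl, rfl⟩ | ⟨rfl, rfl⟩ <;>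
      rw [hsucc (by omega) (by omega), hsucc (by omega) (by omega), hmod (by omega),
        hmod (by omega)] at hab <;> split_ifs at hab <;> omega
  · intro h
    refine ⟨_, _, rfl, ?_⟩
    rw [hsucc (by omega) (by omega), hsucc (by omega) (by omega), hmod (by omega),
      hmod (by omega)]
    split_ifs <;> omega

lemma crosses_chord_iff {x₁ y₁ x₂ y₂ : ℕ} (h₁ : x₁ < y₁) (h₂ : y₁ < n) (h₃ : x₂ < y₂)
    (h₄ : y₂ < n) :
    Crosses (chord n hn r x₁ y₁) (chord n hn r x₂ y₂) ↔
      x₁ < x₂ ∧ x₂ < y₁ ∧ y₁ < y₂ ∨ x₂ < x₁ ∧ x₁ < y₂ ∧ y₂ < y₁ := by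
  have hmod : x₁ % n = x₁ ∧ y₁ % n = y₁ ∧ x₂ % n = x₂ ∧ y₂ % n = y₂ :=
    ⟨Nat.mod_eq_of_lt (by omega), Nat.mod_eq_of_lt h₂, Nat.mod_eq_of_lt (by omega),
      Nat.mod_eq_of_lt h₄⟩
  constructor
  · rintro ⟨a, b, c, d, he, hf, -, -, hac, had, hbc, hbd, hiff⟩
    rcases Sym2.eq_iff.mp he with ⟨rfl, rfl⟩ | ⟨rfl, rfl⟩ <;>
      rcases Sym2.eq_iff.mp hf with ⟨rfl, rfl⟩ | ⟨rfl, rfl⟩ <;>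
      simp only [ne_eq, pt_add_eq_pt_add_iff, val_pt_add_sub_val_pt_add_mod, hmod]
        at hac had hbc hbd hiff <;>
      split_ifs at hiff <;> omega
  · intro h
    refine ⟨_, _, _, _, rfl, rfl, ?_⟩
    simp only [ne_eq, pt_add_eq_pt_add_iff, val_pt_add_sub_val_pt_add_mod, hmod]
    split_ifs <;> omega

lemma forall_not_crosses_of_offsets {E : Finset (Sym2 (Fin n))}
    (Q : ℕ → ℕ → Prop) (hE : ∀ e ∈ E, ∃ x y, e = chord n hn r x y ∧ x < y ∧ y < n ∧ Q x y)
    (hQ : ∀ x₁ y₁ x₂ y₂, Q x₁ y₁ → Q x₂ y₂ → x₁ < x₂ → x₂ < y₁ → y₁ < y₂ → False) :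
    ∀ e ∈ E, ∀ f ∈ E, ¬ Crosses e f := by
  intro e he f hf
  obtain ⟨x₁, y₁, rfl, h₁, h₂, hQ₁⟩ := hE e he
  obtain ⟨x₂, y₂, rfl, h₃, h₄, hQ₂⟩ := hE f hf
  rw [crosses_chord_iff h₁ h₂ h₃ h₄]
  rintro (⟨a, b, c⟩ | ⟨a, b, c⟩)
  exacts [hQ _ _ _ _ hQ₁ hQ₂ a b c, hQ _ _ _ _ hQ₂ hQ₁ a b c]

lemma mem_arc_add_iff {s len : ℕ} {e : Sym2 (Fin n)} :
    e ∈ arc n hn (r + s) len ↔ ∃ x, s ≤ x ∧ x < s + len ∧ e = chord n hn r x (x + 1) := by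
  simp only [arc, Finset.mem_image, Finset.mem_range, chord]
  constructor
  · rintro ⟨i, hi, rfl⟩
    exact ⟨s + i, by omega, by omega, by simp only [Nat.add_assoc]⟩
  · rintro ⟨x, hsx, hx, rfl⟩
    refine ⟨x - s, by omega, ?_⟩
    rw [Nat.add_assoc, Nat.add_sub_cancel' hsx]
    rfl

end Chords

section SpanningPaths

variable {n : ℕ}

lemma mem_pathEdges {p : Equiv.Perm (Fin n)} {e : Sym2 (Fin n)} :
    e ∈ pathEdges p ↔ ∃ i j : Fin n, e = s(p i, p j) ∧ j.val = i.val + 1 := by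
  simp only [pathEdges, Finset.mem_filter, Finset.mem_univ, true_and]

lemma card_pathEdges (p : Equiv.Perm (Fin n)) : (pathEdges p).card = n - 1 := by
  let step : Fin (n - 1) → Sym2 (Fin n) := fun t =>
    s(p ⟨t, by omega⟩, p ⟨t + 1, by omega⟩)
  have himage : pathEdges p = Finset.univ.image step := by
    ext e
    simp only [mem_pathEdges, Finset.mem_image, Finset.mem_univ, true_and, step]
    constructor
    · rintro ⟨i, j, rfl, hj⟩
      refine ⟨⟨i, by omega⟩, ?_⟩
      congr 2
      exact Fin.ext hj.symm
    · rintro ⟨t, rfl⟩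
      exact ⟨_, _, rfl, rfl⟩
  have hinj : Function.Injective step := by
    intro t u h
    rcases Sym2.eq_iff.mp h with ⟨h₁, -⟩ | ⟨h₁, h₂⟩
    · exact Fin.ext (Fin.mk.inj_iff.mp (p.injective h₁))
    · have := Fin.ext_iff.mp (p.injective h₁)
      have := Fin.ext_iff.mp (p.injective h₂)
      simp only at *
      omega
  rw [himage, Finset.card_image_of_injective _ hinj, Finset.card_univ, Fintype.card_fin]

lemma not_isDiag_of_mem_pathEdges {p : Equiv.Perm (Fin n)} {e : Sym2 (Fin n)}
    (he : e ∈ pathEdges p) : ¬ e.IsDiag := by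
  obtain ⟨i, j, rfl, hj⟩ := mem_pathEdges.mp he
  rw [Sym2.mk_isDiag_iff, p.injective.eq_iff, Fin.ext_iff]
  omega

lemma exists_pathEdges_eq {E : Finset (Sym2 (Fin n))} {σ : Fin n → Fin n}
    (hσ : Function.Injective σ)
    (hE : ∀ i j : Fin n, j.val = i.val + 1 → s(σ i, σ j) ∈ E) (hcard : E.card ≤ n - 1) :
    ∃ p : Equiv.Perm (Fin n), E = pathEdges p := by
  let p := Equiv.ofBijective σ (Finite.injective_iff_bijective.mp hσ)
  refine ⟨p, (Finset.eq_of_subset_of_card_le (fun e he => ?_) ?_).symm⟩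
  · obtain ⟨i, j, rfl, hj⟩ := mem_pathEdges.mp he
    exact hE i j hj
  · rwa [card_pathEdges]

lemma degIn_pathEdges_le_two (p : Equiv.Perm (Fin n)) (x : Fin n) :
    degIn (pathEdges p) x ≤ 2 := by
  obtain ⟨k, rfl⟩ := p.surjective x
  let before := Finset.univ.filter fun i : Fin n => i.val + 1 = k.val
  let after := Finset.univ.filter fun i : Fin n => k.val + 1 = i.val
  have hsub : (pathEdges p).filter (p k ∈ ·) ⊆ (before ∪ after).image fun i => s(p i, p k) := by
    intro e he
    obtain ⟨he, hk⟩ := Finset.mem_filter.mp he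
    obtain ⟨i, j, rfl, hj⟩ := mem_pathEdges.mp he
    simp only [Finset.mem_image, Finset.mem_union, Finset.mem_filter, Finset.mem_univ,
      true_and, before, after]
    rcases Sym2.mem_iff.mp hk with h | h <;> rw [p.injective.eq_iff] at h <;> subst h
    exacts [⟨j, Or.inr hj.symm, Sym2.eq_swap⟩, ⟨i, Or.inl hj.symm, rfl⟩]
  have hsubsingleton (q : ℕ → Prop) [DecidablePred q] (hq : ∀ a b, q a → q b → a = b) :
      (Finset.univ.filter fun i : Fin n => q i.val).card ≤ 1 :=
    Finset.card_le_one.mpr fun a ha b hb =>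
      Fin.ext (hq _ _ (Finset.mem_filter.mp ha).2 (Finset.mem_filter.mp hb).2)
  calc degIn (pathEdges p) (p k) ≤ (before ∪ after).card :=
        (Finset.card_le_card hsub).trans Finset.card_image_le
    _ ≤ before.card + after.card := Finset.card_union_le _ _
    _ ≤ 1 + 1 := Nat.add_le_add
        (hsubsingleton _ fun a b (ha : a + 1 = k) (hb : b + 1 = k) => by omega)
        (hsubsingleton _ fun a b (ha : k + 1 = a) (hb : k + 1 = b) => by omega)

lemma one_le_degIn_pathEdges (hn : 2 ≤ n) (p : Equiv.Perm (Fin n)) (x : Fin n) :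
    1 ≤ degIn (pathEdges p) x := by
  rw [degIn, Nat.one_le_iff_ne_zero, ← Nat.pos_iff_ne_zero, Finset.card_pos]
  obtain ⟨k, rfl⟩ := p.surjective x
  by_cases hk : k.val + 1 < n
  · refine ⟨s(p k, p ⟨k + 1, hk⟩), Finset.mem_filter.mpr ⟨?_, Sym2.mem_mk_left _ _⟩⟩
    exact mem_pathEdges.mpr ⟨_, _, rfl, rfl⟩
  · have := k.2
    refine ⟨s(p ⟨k - 1, by omega⟩, p k), Finset.mem_filter.mpr ⟨?_, Sym2.mem_mk_right _ _⟩⟩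
    exact mem_pathEdges.mpr ⟨_, _, rfl, by simp only; omega⟩

lemma degIn_insert {E : Finset (Sym2 (Fin n))} {f : Sym2 (Fin n)} (hf : f ∉ E)
    (x : Fin n) : degIn (insert f E) x = degIn E x + if x ∈ f then 1 else 0 := by
  unfold degIn
  rw [Finset.filter_insert]
  split_ifs with h
  · rw [Finset.card_insert_of_notMem (fun h' => hf (Finset.mem_filter.mp h').1)]
  · rfl

lemma two_le_degIn {E : Finset (Sym2 (Fin n))} {e f : Sym2 (Fin n)} {x : Fin n}
    (he : e ∈ E) (hf : f ∈ E) (hef : e ≠ f) (hxe : x ∈ e) (hxf : x ∈ f) : 2 ≤ degIn E x :=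
  Finset.one_lt_card.mpr
    ⟨e, Finset.mem_filter.mpr ⟨he, hxe⟩, f, Finset.mem_filter.mpr ⟨hf, hxf⟩, hef⟩

lemma pathGraph_adj_iff {u v : PVert n} :
    (pathGraph n).Adj u v ↔ ∃ e ∈ u.1, ∃ f ∉ u.1, v.1 = insert f (u.1.erase e) := by
  constructor
  · rintro ⟨-, hcard⟩
    obtain ⟨⟨p, hp⟩, -⟩ := u.2
    obtain ⟨⟨q, hq⟩, -⟩ := v.2
    have hsame : (u.1 \ v.1).card = (v.1 \ u.1).card :=
      Finset.card_sdiff_comm (by rw [hp, hq, card_pathEdges, card_pathEdges])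
    rw [Finset.card_union_of_disjoint disjoint_sdiff_sdiff] at hcard
    obtain ⟨e, he⟩ := Finset.card_eq_one.mp (show (u.1 \ v.1).card = 1 by omega)
    obtain ⟨f, hf⟩ := Finset.card_eq_one.mp (show (v.1 \ u.1).card = 1 by omega)
    have he' := Finset.mem_sdiff.mp (he ▸ Finset.mem_singleton_self e)
    have hf' := Finset.mem_sdiff.mp (hf ▸ Finset.mem_singleton_self f)
    refine ⟨e, he'.1, f, hf'.2, Finset.ext fun g => ?_⟩
    have hu := Finset.ext_iff.mp he g
    have hv := Finset.ext_iff.mp hf g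
    simp only [Finset.mem_sdiff, Finset.mem_singleton] at hu hv
    simp only [Finset.mem_insert, Finset.mem_erase]
    grind
  · rintro ⟨e, he, f, hf, hv⟩
    have hef : e ≠ f := fun h => hf (h ▸ he)
    have hsd : u.1 \ v.1 ∪ v.1 \ u.1 = {e, f} := by
      ext g
      simp only [hv, Finset.mem_union, Finset.mem_sdiff, Finset.mem_insert, Finset.mem_erase,
        Finset.mem_singleton]
      grind
    refine ⟨fun h => ?_, by rw [hsd, Finset.card_pair hef]⟩
    have : e ∈ v.1 := h ▸ he
    simp [hv, hef] at this

end SpanningPaths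

section LevelOne

variable {n : ℕ} {hn : 0 < n} {r m : ℕ}

lemma mem_twoArcs_iff (hm : m + 2 ≤ n) {e : Sym2 (Fin n)} :
    e ∈ arc n hn r m ∪ arc n hn (r + m + 1) (n - m - 2) ↔
      ∃ x, e = chord n hn r x (x + 1) ∧ x + 1 < n ∧ x ≠ m := by
  rw [Finset.mem_union, show e ∈ arc n hn r m ↔ _ from mem_arc_add_iff (s := 0),
    show e ∈ arc n hn (r + m + 1) (n - m - 2) ↔ _ from mem_arc_add_iff (s := m + 1)]
  constructor
  · rintro (⟨x, -, hx, rfl⟩ | ⟨x, hx, hx', rfl⟩) <;> refine ⟨x, rfl, ?_, ?_⟩ <;> omega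
  · rintro ⟨x, rfl, hx, hxm⟩
    rcases Nat.lt_or_gt_of_ne hxm with h | h
    exacts [Or.inl ⟨x, by omega, by omega, rfl⟩, Or.inr ⟨x, by omega, by omega, rfl⟩]

lemma mem_twoArcs_union_singleton_iff (hm : m + 2 ≤ n) {a b : ℕ} (hab : a < b) (hb : b < n)
    {e : Sym2 (Fin n)} :
    e ∈ arc n hn r m ∪ arc n hn (r + m + 1) (n - m - 2) ∪ {chord n hn r a b} ↔
      ∃ x y, e = chord n hn r x y ∧ x < y ∧ y < n ∧ (y = x + 1 ∧ x ≠ m ∨ x = a ∧ y = b) := by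
  rw [Finset.mem_union, mem_twoArcs_iff hm, Finset.mem_singleton]
  constructor
  · rintro (⟨x, rfl, hx, hxm⟩ | rfl)
    exacts [⟨x, x + 1, rfl, by omega, hx, Or.inl ⟨rfl, hxm⟩⟩,
      ⟨a, b, rfl, hab, hb, Or.inr ⟨rfl, rfl⟩⟩]
  · rintro ⟨x, y, rfl, -, hy, ⟨rfl, hxm⟩ | ⟨rfl, rfl⟩⟩
    exacts [Or.inl ⟨x, rfl, hy, hxm⟩, Or.inr rfl]

lemma chord_mem_twoArcs_union_singleton_iff (hm : m + 2 ≤ n) {a b : ℕ} (hab : a < b)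
    (hb : b < n) {x y : ℕ} (hxy : x < y) (hy : y < n) :
    chord n hn r x y ∈ arc n hn r m ∪ arc n hn (r + m + 1) (n - m - 2) ∪ {chord n hn r a b} ↔
      y = x + 1 ∧ x ≠ m ∨ x = a ∧ y = b := by
  rw [mem_twoArcs_union_singleton_iff hm hab hb]
  constructor
  · rintro ⟨x', y', heq, hxy', hy', hQ⟩
    rw [chord_eq_chord_iff (by omega) hy (by omega) hy'] at heq
    omega
  · exact fun hQ => ⟨x, y, rfl, hxy, hy, hQ⟩

lemma mem_insert_erase_of_diag_ad (hm0 : 0 < m) (hm : m + 2 ≤ n) {E : Finset (Sym2 (Fin n))}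
    (hE : E = arc n hn r m ∪ arc n hn (r + m + 1) (n - m - 2) ∪ {chord n hn r 0 (m + 1)})
    {e : Sym2 (Fin n)} :
    e ∈ insert (chord n hn r 0 m) (E.erase (chord n hn r 0 1)) ↔
      ∃ x y, e = chord n hn r x y ∧ x < y ∧ y < n ∧
        (y = x + 1 ∧ x ≠ 0 ∧ x ≠ m ∨ x = 0 ∧ (y = m ∨ y = m + 1)) := by
  rw [Finset.mem_insert, Finset.mem_erase, hE,
    mem_twoArcs_union_singleton_iff (by omega) (by omega) (by omega)]
  constructor
  · rintro (rfl | ⟨hne, x, y, rfl, hxy, hy, hQ⟩)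
    · exact ⟨0, m, rfl, by omega, by omega, by omega⟩
    · rw [Ne, chord_eq_chord_iff (by omega) hy (by omega) (by omega)] at hne
      exact ⟨x, y, rfl, hxy, hy, by omega⟩
  · rintro ⟨x, y, rfl, hxy, hy, hQ⟩
    by_cases h : x = 0 ∧ y = m
    · exact Or.inl (by rw [h.1, h.2])
    · refine Or.inr ⟨?_, x, y, rfl, hxy, hy, by omega⟩
      rw [Ne, chord_eq_chord_iff (by omega) hy (by omega) (by omega)]
      omega

lemma isNCPath_insert_erase_of_diag_ad (hm2 : 2 ≤ m) (hm : m + 3 ≤ n) {v : PVert n}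
    (hv : v.1 = arc n hn r m ∪ arc n hn (r + m + 1) (n - m - 2) ∪ {chord n hn r 0 (m + 1)}) :
    IsNCPath (insert (chord n hn r 0 m) (v.1.erase (chord n hn r 0 1))) := by
  have hmem {e} := mem_insert_erase_of_diag_ad (e := e) (by omega) (by omega) hv
  have hcard : (insert (chord n hn r 0 m) (v.1.erase (chord n hn r 0 1))).card = n - 1 := by
    obtain ⟨⟨p, hp⟩, -⟩ := v.2
    rw [Finset.card_insert_of_notMem, Finset.card_erase_of_mem, hp, card_pathEdges]
    · omega
    · rw [hv, chord_mem_twoArcs_union_singleton_iff (by omega) (by omega) (by omega)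
        (by omega) (by omega)]
      omega
    · rw [Finset.mem_erase, hv, chord_mem_twoArcs_union_singleton_iff (by omega) (by omega)
        (by omega) (by omega) (by omega)]
      omega
  -- the visiting order `b, …, c, a, d, …, y`
  let shift : ℕ → ℕ := fun k => if k < m then k + 1 else if k = m then 0 else k
  have hshift : ∀ k < n, shift k < n := fun k hk => by dsimp only [shift]; split_ifs <;> omega
  refine ⟨exists_pathEdges_eq (σ := fun i => pt n hn (r + shift i)) ?_ ?_ hcard.le, ?_⟩
  · intro i j h
    rw [pt_add_inj hn r (hshift i i.2) (hshift j j.2)] at h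
    dsimp only [shift] at h
    exact Fin.ext (by split_ifs at h <;> omega)
  · intro i j hj
    refine hmem.mpr ?_
    change ∃ x y, chord n hn r (shift i) (shift j) = _ ∧ _
    dsimp only [shift]
    split_ifs <;> first
      | exact ⟨_, _, rfl, by omega, by omega, by omega⟩
      | exact ⟨_, _, chord_comm _ _, by omega, by omega, by omega⟩
  · refine forall_not_crosses_of_offsets _ (fun e he => hmem.mp he) ?_
    intro x₁ y₁ x₂ y₂ h₁ h₂ _ _ _
    omega

lemma diagCount_eq_two_of_diag_ad (hm2 : 2 ≤ m) (hm : m + 3 ≤ n) {v v' : PVert n}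
    (hv : v.1 = arc n hn r m ∪ arc n hn (r + m + 1) (n - m - 2) ∪ {chord n hn r 0 (m + 1)})
    (hv' : v'.1 = insert (chord n hn r 0 m) (v.1.erase (chord n hn r 0 1))) :
    diagCount v' = 2 := by
  have hdiag : v'.1.filter (fun e => ¬ IsHullEdge e) =
      {chord n hn r 0 m, chord n hn r 0 (m + 1)} := by
    ext e
    rw [Finset.mem_filter, hv', mem_insert_erase_of_diag_ad (by omega) (by omega) hv, Finset.mem_insert,
      Finset.mem_singleton]
    constructor
    · rintro ⟨⟨x, y, rfl, hxy, hy, hQ⟩, hdiag⟩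
      rw [isHullEdge_chord_iff hxy hy] at hdiag
      rw [chord_eq_chord_iff (by omega) hy (by omega) (by omega),
        chord_eq_chord_iff (by omega) hy (by omega) (by omega)]
      omega
    · rintro (rfl | rfl)
      · exact ⟨⟨0, m, rfl, by omega, by omega, by omega⟩,
          by rw [isHullEdge_chord_iff (by omega) (by omega)]; omega⟩
      · exact ⟨⟨0, m + 1, rfl, by omega, by omega, by omega⟩,
          by rw [isHullEdge_chord_iff (by omega) (by omega)]; omega⟩
  rw [diagCount, hdiag, Finset.card_pair]
  rw [Ne, chord_eq_chord_iff (by omega) (by omega) (by omega) (by omega)]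
  omega

theorem exists_adj_diagCount_eq_two_of_diag_ad (hm2 : 2 ≤ m) (hm : m + 3 ≤ n) {v : PVert n}
    (hv : v.1 = arc n hn r m ∪ arc n hn (r + m + 1) (n - m - 2) ∪ {chord n hn r 0 (m + 1)}) :
    ∃ v' : PVert n, (pathGraph n).Adj v v' ∧ diagCount v' = 2 ∧ chord n hn r 0 1 ∉ v'.1 := by
  have hmem {x y} (hxy : x < y) (hy : y < n) := hv ▸
    chord_mem_twoArcs_union_singleton_iff (hn := hn) (r := r) (show m + 2 ≤ n by omega)
      (show 0 < m + 1 by omega) (show m + 1 < n by omega) hxy hy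
  have hab : chord n hn r 0 1 ∈ v.1 := (hmem (by omega) (by omega)).mpr (by omega)
  have hac : chord n hn r 0 m ∉ v.1 := fun h => by
    have := (hmem (by omega) (by omega)).mp h
    omega
  refine ⟨⟨_, isNCPath_insert_erase_of_diag_ad hm2 hm hv⟩, pathGraph_adj_iff.mpr
    ⟨_, hab, _, hac, rfl⟩, diagCount_eq_two_of_diag_ad hm2 hm hv rfl, ?_⟩
  rw [mem_insert_erase_of_diag_ad (by omega) (by omega) hv]
  rintro ⟨x, y, heq, hxy, hy, hQ⟩
  rw [chord_eq_chord_iff (by omega) (by omega) (by omega) hy] at heq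
  omega

lemma mem_erase_of_diag_cy (hm0 : 0 < m) (hm : m + 2 ≤ n) {E : Finset (Sym2 (Fin n))}
    (hE : E = arc n hn r m ∪ arc n hn (r + m + 1) (n - m - 2) ∪ {chord n hn r m (n - 1)})
    {e : Sym2 (Fin n)} :
    e ∈ E.erase (chord n hn r 0 1) ↔
      ∃ x y, e = chord n hn r x y ∧ x < y ∧ y < n ∧
        (y = x + 1 ∧ x ≠ 0 ∧ x ≠ m ∨ x = m ∧ y = n - 1) := by
  rw [Finset.mem_erase, hE, mem_twoArcs_union_singleton_iff (by omega) (by omega) (by omega)]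
  constructor
  · rintro ⟨hne, x, y, rfl, hxy, hy, hQ⟩
    rw [Ne, chord_eq_chord_iff (by omega) hy (by omega) (by omega)] at hne
    exact ⟨x, y, rfl, hxy, hy, by omega⟩
  · rintro ⟨x, y, rfl, hxy, hy, hQ⟩
    refine ⟨?_, x, y, rfl, hxy, hy, by omega⟩
    rw [Ne, chord_eq_chord_iff (by omega) hy (by omega) (by omega)]
    omega

lemma degIn_erase_of_diag_cy_eq_zero (hm0 : 0 < m) (hm : m + 3 ≤ n) {E : Finset (Sym2 (Fin n))}
    (hE : E = arc n hn r m ∪ arc n hn (r + m + 1) (n - m - 2) ∪ {chord n hn r m (n - 1)}) :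
    degIn (E.erase (chord n hn r 0 1)) (pt n hn (r + 0)) = 0 := by
  rw [degIn, Finset.card_eq_zero, Finset.filter_eq_empty_iff]
  intro e he
  obtain ⟨x, y, rfl, hxy, hy, hQ⟩ := (mem_erase_of_diag_cy hm0 (by omega) hE).mp he
  rw [pt_add_mem_chord_iff (by omega) hy (by omega)]
  omega

lemma two_le_degIn_erase_of_diag_cy (hm0 : 0 < m) (hm : m + 3 ≤ n) {E : Finset (Sym2 (Fin n))}
    (hE : E = arc n hn r m ∪ arc n hn (r + m + 1) (n - m - 2) ∪ {chord n hn r m (n - 1)})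
    {x : ℕ} (hx : x < n) (hx0 : x ≠ 0) (hx1 : x ≠ 1) (hxm : x ≠ m + 1) :
    2 ≤ degIn (E.erase (chord n hn r 0 1)) (pt n hn (r + x)) := by
  obtain ⟨u₁, w₁, u₂, w₂, hu₁, hw₁, hQ₁, hu₂, hw₂, hQ₂, hx₁, hx₂, hne⟩ : ∃ u₁ w₁ u₂ w₂,
      u₁ < w₁ ∧ w₁ < n ∧ (w₁ = u₁ + 1 ∧ u₁ ≠ 0 ∧ u₁ ≠ m ∨ u₁ = m ∧ w₁ = n - 1) ∧
      u₂ < w₂ ∧ w₂ < n ∧ (w₂ = u₂ + 1 ∧ u₂ ≠ 0 ∧ u₂ ≠ m ∨ u₂ = m ∧ w₂ = n - 1) ∧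
      (x = u₁ ∨ x = w₁) ∧ (x = u₂ ∨ x = w₂) ∧ ¬(u₁ = u₂ ∧ w₁ = w₂) := by
    by_cases h₁ : x = m
    · exact ⟨m - 1, m, m, n - 1, by omega⟩
    by_cases h₂ : x = n - 1
    · exact ⟨n - 2, n - 1, m, n - 1, by omega⟩
    exact ⟨x - 1, x, x, x + 1, by omega⟩
  have hmem := fun {e} => mem_erase_of_diag_cy (e := e) hm0 (by omega) hE
  refine two_le_degIn (hmem.mpr ⟨u₁, w₁, rfl, hu₁, hw₁, hQ₁⟩)
    (hmem.mpr ⟨u₂, w₂, rfl, hu₂, hw₂, hQ₂⟩) ?_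
    ((pt_add_mem_chord_iff (by omega) hw₁ hx).mpr hx₁)
    ((pt_add_mem_chord_iff (by omega) hw₂ hx).mpr hx₂)
  rw [Ne, chord_eq_chord_iff (by omega) (by omega) (by omega) (by omega)]
  omega

lemma chord_zero_one_mem_of_adj_of_diag_cy (hm0 : 0 < m) (hm : m + 3 ≤ n) {v v' : PVert n}
    (hv : v.1 = arc n hn r m ∪ arc n hn (r + m + 1) (n - m - 2) ∪ {chord n hn r m (n - 1)})
    (hadj : (pathGraph n).Adj v v') : chord n hn r 0 1 ∈ v'.1 := by
  obtain ⟨e, he, f, hf, hv'⟩ := pathGraph_adj_iff.mp hadj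
  have hmem {x y} (hxy : x < y) (hy : y < n) := hv ▸
    chord_mem_twoArcs_union_singleton_iff (hn := hn) (r := r) (show m + 2 ≤ n by omega)
      (show m < n - 1 by omega) (show n - 1 < n by omega) hxy hy
  have hab : chord n hn r 0 1 ∈ v.1 := (hmem (by omega) (by omega)).mpr (by omega)
  by_contra hab'
  obtain rfl : e = chord n hn r 0 1 := by
    by_contra hne
    exact hab' (hv' ▸ Finset.mem_insert_of_mem (Finset.mem_erase.mpr ⟨Ne.symm hne, hab⟩))
  obtain ⟨⟨p, hp⟩, hnc⟩ := v'.2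
  have hdeg (z : Fin n) : degIn (pathEdges p) z =
      degIn (v.1.erase (chord n hn r 0 1)) z + if z ∈ f then 1 else 0 := by
    rw [← hp, hv']
    exact degIn_insert (fun h => hf (Finset.mem_of_mem_erase h)) z
  have ha : pt n hn (r + 0) ∈ f := by
    by_contra ha
    have := one_le_degIn_pathEdges (by omega) p (pt n hn (r + 0))
    rw [hdeg, if_neg ha, degIn_erase_of_diag_cy_eq_zero hm0 hm hv] at this
    omega
  obtain ⟨w, rfl⟩ := Sym2.mem_iff_exists.mp ha
  obtain ⟨x, hx, rfl⟩ := exists_eq_pt_add hn r w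
  have hf' : chord n hn r 0 x ∈ v'.1 := hv' ▸ Finset.mem_insert_self _ _
  have hx0 : x ≠ 0 := by
    rintro rfl
    exact not_isDiag_of_mem_pathEdges (hp ▸ hf') (Sym2.mk_isDiag_iff.mpr rfl)
  have hx : x = 1 ∨ x = m + 1 := by
    by_contra hx'
    have := degIn_pathEdges_le_two p (pt n hn (r + x))
    rw [hdeg, if_pos (Sym2.mem_mk_right _ _)] at this
    have := two_le_degIn_erase_of_diag_cy hm0 hm hv hx hx0 (by omega) (by omega)
    omega
  rcases hx with rfl | rfl
  · exact hf hab
  · refine hnc _ hf' (chord n hn r m (n - 1)) ?_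
      ((crosses_chord_iff (by omega) (by omega) (by omega) (by omega)).mpr (by omega))
    rw [hv', Finset.mem_insert, Finset.mem_erase, Ne, hmem (by omega) (by omega),
      chord_eq_chord_iff (by omega) (by omega) (by omega) (by omega)]
    omega

end LevelOne

/-- Recovery at level 1.  Let `v` be a plane spanning path with exactly one
diagonal, whose hull edges form the two arcs `P₁ = (a = pt r, b = pt (r+1), …,
c = pt (r+m))` (with at least two edges) and `P₂ = (d = pt (r+m+1), …,
y = pt (r+n-1))`.  If the diagonal of `v` is `(a,d)` then `v` has a neighbor `v'`
at level 2 with `(a,b) ∉ v'`; if the diagonal is `(c,y)`, no such neighbor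
exists. -/
theorem level_one_recovery (n : ℕ) (hn : 5 ≤ n) (r m : ℕ)
    (hm2 : 2 ≤ m) (hm : m ≤ n - 3) (v : PVert n) :
    (v.1 = arc n (by omega) r m ∪ arc n (by omega) (r + m + 1) (n - m - 2) ∪
        {s(pt n (by omega) r, pt n (by omega) (r + m + 1))} →
      ∃ v' : PVert n, (pathGraph n).Adj v v' ∧ diagCount v' = 2 ∧
        s(pt n (by omega) r, pt n (by omega) (r + 1)) ∉ v'.1) ∧
    (v.1 = arc n (by omega) r m ∪ arc n (by omega) (r + m + 1) (n - m - 2) ∪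
        {s(pt n (by omega) (r + m), pt n (by omega) (r + n - 1))} →
      ¬ ∃ v' : PVert n, (pathGraph n).Adj v v' ∧ diagCount v' = 2 ∧
        s(pt n (by omega) r, pt n (by omega) (r + 1)) ∉ v'.1) := by
  have hn0 : 0 < n := by omega
  refine ⟨fun hv => exists_adj_diagCount_eq_two_of_diag_ad (hn := hn0) hm2 (by omega) hv, ?_⟩
  rintro hv ⟨v', hadj, -, hab⟩
  have hv' : v.1 = arc n hn0 r m ∪ arc n hn0 (r + m + 1) (n - m - 2) ∪
      {chord n hn0 r m (n - 1)} := by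
    rw [hv, chord, Nat.add_sub_assoc (by omega)]
  exact hab (chord_zero_one_mem_of_adj_of_diag_cy (by omega) (by omega) hv' hadj)

end PG
end
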